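/- Let A be an m×n real matrix, H an n×n real matrix, v ∈ ℝ^m and w ∈ ℝ^n with δ = w ⬝ᵥ (H *ᵥ (Aᵀ *ᵥ v)) ≠ 0, and let H' = H - (1/δ) • vecMulVec (H *ᵥ (Aᵀ *ᵥ v)) (Hᵀ *ᵥ w). Then for every u ∈ ℝ^m with H *ᵥ (Aᵀ *ᵥ u) = 0 one has H' *ᵥ (Aᵀ *ᵥ u) = 0, and for every u' ∈ ℝ^n with Hᵀ *ᵥ u' = 0 one has H'ᵀ *ᵥ u' = 0. -/

import Mathlib

/-!
The correction term of the update is the rank-one matrix with column `H *ᵥ p` and row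
`wᵀ H`. A vector `x` with `H x = 0` is killed by the row, since `(Hᵀ w) ⬝ x = w ⬝ (H x)`, and a
vector `y` with `Hᵀ y = 0` is killed by the column from the left, since `(H p) ⬝ y = p ⬝ (Hᵀ y)`.
-/

open Matrix

section AbsUpdate

variable {K m n : Type*} [Field K] [Fintype m] [Fintype n]

/-- The scaled ABS update of `H`, where `p` plays the role of `Aᵀ *ᵥ v`. -/
def absUpdate (H : Matrix m n K) (p : n → K) (w : m → K) : Matrix m n K :=
  H - (1 / (w ⬝ᵥ (H *ᵥ p))) • vecMulVec (H *ᵥ p) (Hᵀ *ᵥ w)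

variable {H : Matrix m n K} (p : n → K) (w : m → K)

theorem absUpdate_mulVec_eq_zero {x : n → K} (hx : H *ᵥ x = 0) :
    absUpdate H p w *ᵥ x = 0 := by
  have hwx : (Hᵀ *ᵥ w) ⬝ᵥ x = 0 := by
    rw [mulVec_transpose, ← dotProduct_mulVec, hx, dotProduct_zero]
  simp [absUpdate, sub_mulVec, smul_mulVec, vecMulVec_mulVec, hwx, hx]

theorem transpose_absUpdate_mulVec_eq_zero {y : m → K} (hy : Hᵀ *ᵥ y = 0) :
    (absUpdate H p w)ᵀ *ᵥ y = 0 := by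
  have hpy : (H *ᵥ p) ⬝ᵥ y = 0 := by
    rw [dotProduct_comm, dotProduct_mulVec, ← mulVec_transpose, hy, zero_dotProduct]
  simp [absUpdate, transpose_vecMulVec, sub_mulVec, smul_mulVec, vecMulVec_mulVec, hpy, hy]

end AbsUpdate

theorem abs_update_preserves_annihilation_general {m n : ℕ}
    (A : Matrix (Fin m) (Fin n) ℝ) (H : Matrix (Fin n) (Fin n) ℝ)
    (v : Fin m → ℝ) (w : Fin n → ℝ)
    (H' : Matrix (Fin n) (Fin n) ℝ)
    (hH' : H' = H - (1 / (w ⬝ᵥ (H *ᵥ (Aᵀ *ᵥ v)))) •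
      vecMulVec (H *ᵥ (Aᵀ *ᵥ v)) (Hᵀ *ᵥ w)) :
    (∀ u : Fin m → ℝ, H *ᵥ (Aᵀ *ᵥ u) = 0 → H' *ᵥ (Aᵀ *ᵥ u) = 0) ∧
    (∀ u' : Fin n → ℝ, Hᵀ *ᵥ u' = 0 → H'ᵀ *ᵥ u' = 0) := by
  have hH'_eq : H' = absUpdate H (Aᵀ *ᵥ v) w := hH'
  subst hH'_eq
  exact ⟨fun _ hu => absUpdate_mulVec_eq_zero _ _ hu,
    fun _ hu' => transpose_absUpdate_mulVec_eq_zero _ _ hu'⟩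

theorem abs_update_preserves_annihilation {m n : ℕ}
    (A : Matrix (Fin m) (Fin n) ℝ) (H : Matrix (Fin n) (Fin n) ℝ)
    (v : Fin m → ℝ) (w : Fin n → ℝ)
    (hδ : w ⬝ᵥ (H *ᵥ (Aᵀ *ᵥ v)) ≠ 0)
    (H' : Matrix (Fin n) (Fin n) ℝ)
    (hH' : H' = H - (1 / (w ⬝ᵥ (H *ᵥ (Aᵀ *ᵥ v)))) •
      vecMulVec (H *ᵥ (Aᵀ *ᵥ v)) (Hᵀ *ᵥ w)) :
    (∀ u : Fin m → ℝ, H *ᵥ (Aᵀ *ᵥ u) = 0 → H' *ᵥ (Aᵀ *ᵥ u) = 0) ∧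
    (∀ u' : Fin n → ℝ, Hᵀ *ᵥ u' = 0 → H'ᵀ *ᵥ u' = 0) :=
  abs_update_preserves_annihilation_general A H v w H' hH'
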